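/- Let N be prime, g₁,…,gₙ ∈ ℤ/Nℤ, and suppose a non-homogeneous SIS oracle yields: (1) integers h₀,h₁,…,hₙ with |hᵢ| ≤ K, h₀ ≢ 0 mod N, and Σ_{i=1}^n hᵢ gᵢ ≡ h₀ (mod N); and (2) integers h₀',h₁',…,hₙ' with |hᵢ'| ≤ K, satisfying Σ_{i=1}^n hᵢ' (h₀⁻¹ gᵢ) ≡ h₀' (mod N). Then the integers sᵢ = hᵢ' − h₀' hᵢ (i = 1,…,n) satisfy Σ_{i=1}^n sᵢ gᵢ ≡ 0 (mod N) and |sᵢ| ≤ K + K² for all i. -/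
import Mathlib


/-- Two calls to a non-homogeneous SIS oracle with bound `K` yield a
homogeneous SIS solution with bound `K + K²`. -/
theorem sis_nonhom_to_hom (n N : ℕ) [Fact N.Prime] (g : Fin n → ZMod N) (K : ℤ)
    (h₀ : ℤ) (h : Fin n → ℤ) (h₀' : ℤ) (h' : Fin n → ℤ)
    (hb0 : |h₀| ≤ K) (hb : ∀ i, |h i| ≤ K)
    (hb0' : |h₀'| ≤ K) (hb' : ∀ i, |h' i| ≤ K)
    (hne : (h₀ : ZMod N) ≠ 0)
    (heq : ∑ i, (h i : ZMod N) * g i = (h₀ : ZMod N))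
    (heq' : ∑ i, (h' i : ZMod N) * ((h₀ : ZMod N)⁻¹ * g i) = (h₀' : ZMod N)) :
    (∑ i, ((h' i - h₀' * h i : ℤ) : ZMod N) * g i = 0) ∧
      ∀ i, |h' i - h₀' * h i| ≤ K + K ^ 2 := by
  constructor
  · have hsum' : ∑ i, (h' i : ZMod N) * g i = (h₀ : ZMod N) * (h₀' : ZMod N) := by
      have := congrArg (fun x => (h₀ : ZMod N) * x) heq'
      simp only [Finset.mul_sum] at this
      rw [← this]
      apply Finset.sum_congr rfl
      intro i _
      field_simp
    calc ∑ i, ((h' i - h₀' * h i : ℤ) : ZMod N) * g i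
        = ∑ i, ((h' i : ZMod N) * g i - (h₀' : ZMod N) * ((h i : ZMod N) * g i)) := by
          apply Finset.sum_congr rfl; intro i _; push_cast; ring
      _ = (∑ i, (h' i : ZMod N) * g i) - (h₀' : ZMod N) * ∑ i, (h i : ZMod N) * g i := by
          rw [Finset.sum_sub_distrib, Finset.mul_sum]
      _ = 0 := by rw [hsum', heq]; ring
  · intro i
    have h1 := hb' i
    have h2 : |h₀' * h i| ≤ K ^ 2 := by
      rw [abs_mul]
      have hK : 0 ≤ K := le_trans (abs_nonneg _) hb0
      calc |h₀'| * |h i| ≤ K * K := mul_le_mul hb0' (hb i) (abs_nonneg _) hK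
        _ = K ^ 2 := (sq K).symm
    calc |h' i - h₀' * h i| ≤ |h' i| + |h₀' * h i| := abs_sub _ _
      _ ≤ K + K ^ 2 := add_le_add h1 h2
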